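/- arXiv:2510.00901 — 2 statements merged into one kernel-verified Lean document; each statement's English description precedes it below -/
import Mathlib

section
/- Let R be a ring with identity, a, b, c ∈ R and j_a, j_b, j_c ∈ J(R). Suppose a^{‖(b,c)} exists, b⁺ and c⁺ are reflexive inverses of b and c, and that (1 − b·b⁺)·j_b·(1 + b⁺·j_b)⁻¹·(1 − b⁺·b) = 0 and (1 − c·c⁺)·j_c·(1 + c⁺·j_c)⁻¹·(1 − c⁺·c) = 0. Then the (b + j_b, c + j_c)-inverse of a exists and equals (1 + j_b·b⁺)·(1 + a^{‖(b,c)}·(a·j_b·b⁺ + c⁺·j_c·a + c⁺·j_c·a·j_b·b⁺))⁻¹·a^{‖(b,c)}·(1 + c⁺·j_c); moreover 1 + a^{‖(b+j_b,c+j_c)}·j_a is a unit and the (b + j_b, c + j_c)-inverse of a + j_a equals (1 + a^{‖(b+j_b,c+j_c)}·j_a)⁻¹·a^{‖(b+j_b,c+j_c)}. -/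
/-!
Both perturbations are absorbed into units. The hypothesis on `j_b` makes
`b + j_b = (1 + j_b b⁺) b h` with `h = 1 + b⁺ j_b (1 + b⁺ j_b)⁻¹ (1 - b⁺ b)` a unit, and dually
`c + j_c = g c (1 + c⁺ j_c)` with `g` a unit; the units `h`, `g` do not change `bR` and `Rc`,
hence not the (b,c)-inverse. The outer factors are moved onto `a`: an
`(u b, c v)`-inverse of `a` is `u z v` for a (b,c)-inverse `z` of `v a u`, and here
`v a u = a + k` with `k ∈ J(R)`. Finally, if `y` is the (b,c)-inverse of `a` and `1 + y k` is a
unit, then `(1 + y k)⁻¹ y` is the (b,c)-inverse of `a + k`; applied once more with `k = j_a`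
this gives the last claim.
-/

/-- `y` is the (b,c)-inverse of `a`: `c*a*y = c`, `y*a*b = b`, `y ∈ bR ∩ Rc`. -/
def IsBCInverse {R : Type*} [Ring R] (a b c y : R) : Prop :=
  c * a * y = c ∧ y * a * b = b ∧ (∃ s, y = b * s) ∧ (∃ t, y = t * c)

open Ideal

section Units

variable {R : Type*} [Ring R]

theorem isUnit_one_add_of_mem_jacobson_bot {x : R} (hx : x ∈ jacobson (⊥ : Ideal R)) :
    IsUnit (1 + x) := by
  have left_inv : ∀ x ∈ jacobson (⊥ : Ideal R), ∃ z, z * (1 + x) = 1 := fun x hx => by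
    obtain ⟨z, hz⟩ := mem_jacobson_iff.1 hx 1
    rw [mem_bot, mul_one, sub_eq_zero] at hz
    exact ⟨z, by rw [mul_add, mul_one, add_comm, hz]⟩
  -- Only left inverses are given; the left inverse `z = 1 - z x` of `1 + x` has one as well.
  obtain ⟨z, hz⟩ := left_inv x hx
  have hz_eq : 1 + -(z * x) = z := by rw [← hz]; noncomm_ring
  obtain ⟨z', hz'⟩ := left_inv _ (neg_mem (mul_mem_left _ z hx))
  rw [hz_eq] at hz'
  exact ⟨⟨1 + x, z, left_inv_eq_right_inv hz' hz ▸ hz', hz⟩, rfl⟩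

theorem isUnit_one_add_mul_comm {x y : R} (h : IsUnit (1 + x * y)) : IsUnit (1 + y * x) := by
  set u := Ring.inverse (1 + x * y)
  refine ⟨⟨1 + y * x, 1 - y * u * x, ?_, ?_⟩, rfl⟩
  · calc (1 + y * x) * (1 - y * u * x) = 1 + y * x - y * ((1 + x * y) * u) * x := by
          noncomm_ring
      _ = 1 := by rw [Ring.mul_inverse_cancel _ h]; noncomm_ring
  · calc (1 - y * u * x) * (1 + y * x) = 1 + y * x - y * (u * (1 + x * y)) * x := by
          noncomm_ring
      _ = 1 := by rw [Ring.inverse_mul_cancel _ h]; noncomm_ring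

theorem Ring.inverse_one_add_mul_mul {x y : R} (h : IsUnit (1 + x * y)) :
    Ring.inverse (1 + x * y) * x = x * Ring.inverse (1 + y * x) := by
  have h' := isUnit_one_add_mul_comm h
  calc Ring.inverse (1 + x * y) * x
      = Ring.inverse (1 + x * y) * x * ((1 + y * x) * Ring.inverse (1 + y * x)) := by
        rw [Ring.mul_inverse_cancel _ h', mul_one]
    _ = Ring.inverse (1 + x * y) * (1 + x * y) * (x * Ring.inverse (1 + y * x)) := by
        noncomm_ring
    _ = x * Ring.inverse (1 + y * x) := by rw [Ring.inverse_mul_cancel _ h, one_mul]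

end Units

namespace IsBCInverse

variable {R : Type*} [Ring R] {a b c y : R}

theorem mul_units {g h : R} (hy : IsBCInverse a b c y) (hh : IsUnit h) (hg : IsUnit g) :
    IsBCInverse a (b * h) (g * c) y := by
  obtain ⟨hcay, hyab, ⟨s, hs⟩, ⟨t, ht⟩⟩ := hy
  refine ⟨by rw [mul_assoc g, mul_assoc g, hcay], by rw [← mul_assoc, hyab],
    ⟨Ring.inverse h * s, ?_⟩, ⟨t * Ring.inverse g, ?_⟩⟩
  · rw [mul_assoc, ← mul_assoc h, Ring.mul_inverse_cancel _ hh, one_mul, hs]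
  · rw [mul_assoc, ← mul_assoc _ g, Ring.inverse_mul_cancel _ hg, one_mul, ht]

theorem of_mul_mul {u v z : R} (hz : IsBCInverse (v * a * u) b c z) :
    IsBCInverse a (u * b) (c * v) (u * z * v) := by
  obtain ⟨hcz, hzb, ⟨s, hs⟩, ⟨t, ht⟩⟩ := hz
  refine ⟨?_, ?_, ⟨s * v, by rw [hs]; noncomm_ring⟩, ⟨u * t, by rw [ht]; noncomm_ring⟩⟩
  · calc c * v * a * (u * z * v) = c * (v * a * u) * z * v := by noncomm_ring
      _ = c * v := by rw [hcz]
  · calc u * z * v * a * (u * b) = u * (z * (v * a * u) * b) := by noncomm_ring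
      _ = u * b := by rw [hzb]

theorem add {k : R} (hy : IsBCInverse a b c y) (hk : IsUnit (1 + y * k)) :
    IsBCInverse (a + k) b c (Ring.inverse (1 + y * k) * y) := by
  obtain ⟨hcay, hyab, ⟨s, hs⟩, ⟨t, ht⟩⟩ := hy
  have hk' := isUnit_one_add_mul_comm hk
  have hswap := Ring.inverse_one_add_mul_mul hk
  refine ⟨?_, ?_, ⟨s * Ring.inverse (1 + k * y), ?_⟩, ⟨Ring.inverse (1 + y * k) * t, ?_⟩⟩
  · calc c * (a + k) * (Ring.inverse (1 + y * k) * y)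
        = (c * a * y + c * k * y) * Ring.inverse (1 + k * y) := by rw [hswap]; noncomm_ring
      _ = c * ((1 + k * y) * Ring.inverse (1 + k * y)) := by rw [hcay]; noncomm_ring
      _ = c := by rw [Ring.mul_inverse_cancel _ hk', mul_one]
  · calc Ring.inverse (1 + y * k) * y * (a + k) * b
        = Ring.inverse (1 + y * k) * (y * a * b + y * k * b) := by noncomm_ring
      _ = Ring.inverse (1 + y * k) * (1 + y * k) * b := by rw [hyab]; noncomm_ring
      _ = b := by rw [Ring.inverse_mul_cancel _ hk, one_mul]
  · rw [hswap, hs, mul_assoc]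
  · rw [mul_assoc, ← ht]

end IsBCInverse

section Factorization

variable {R : Type*} [Ring R]

theorem exists_isUnit_add_eq_one_add_mul_mul {b p j : R} (hj : j ∈ jacobson (⊥ : Ideal R))
    (h0 : (1 - b * p) * j * Ring.inverse (1 + p * j) * (1 - p * b) = 0) :
    ∃ h, IsUnit h ∧ b + j = (1 + j * p) * b * h := by
  set β := Ring.inverse (1 + p * j)
  refine ⟨1 + p * j * β * (1 - p * b), isUnit_one_add_of_mem_jacobson_bot
    (mul_mem_right _ _ (mul_mem_right _ _ (mul_mem_left _ p hj))), ?_⟩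
  have hβ : (1 + p * j) * β = 1 :=
    Ring.mul_inverse_cancel _ (isUnit_one_add_of_mem_jacobson_bot (mul_mem_left _ p hj))
  calc b + j = (1 + j * p) * b + j * ((1 + p * j) * β) * (1 - p * b) := by
        rw [hβ]; noncomm_ring
    _ = (1 + j * p) * b * (1 + p * j * β * (1 - p * b))
          + (1 + j * p) * ((1 - b * p) * j * β * (1 - p * b)) := by noncomm_ring
    _ = (1 + j * p) * b * (1 + p * j * β * (1 - p * b)) := by rw [h0]; noncomm_ring

theorem exists_isUnit_add_eq_mul_mul_one_add {c p j : R} (hj : j ∈ jacobson (⊥ : Ideal R))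
    (h0 : (1 - c * p) * j * Ring.inverse (1 + p * j) * (1 - p * c) = 0) :
    ∃ g, IsUnit g ∧ c + j = g * (c * (1 + p * j)) := by
  set γ := Ring.inverse (1 + p * j)
  refine ⟨1 + (1 - c * p) * j * γ * p, isUnit_one_add_of_mem_jacobson_bot
    (mul_mem_right _ _ (mul_mem_right _ _ (mul_mem_left _ _ hj))), ?_⟩
  have hγ : γ * (1 + p * j) = 1 :=
    Ring.inverse_mul_cancel _ (isUnit_one_add_of_mem_jacobson_bot (mul_mem_left _ p hj))
  calc c + j = c * (1 + p * j) + (1 - c * p) * j * (γ * (1 + p * j)) := by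
        rw [hγ]; noncomm_ring
    _ = (1 + (1 - c * p) * j * γ * p) * (c * (1 + p * j))
          + (1 - c * p) * j * γ * (1 - p * c) * (1 + p * j) := by noncomm_ring
    _ = (1 + (1 - c * p) * j * γ * p) * (c * (1 + p * j)) := by rw [h0]; noncomm_ring

end Factorization

theorem stmt3_general {R : Type*} [Ring R] (a b c y bp cp ja jb jc : R)
    (hja : ja ∈ Ideal.jacobson (⊥ : Ideal R))
    (hjb : jb ∈ Ideal.jacobson (⊥ : Ideal R))
    (hjc : jc ∈ Ideal.jacobson (⊥ : Ideal R))
    (hy : IsBCInverse a b c y)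
    (hb0 : (1 - b * bp) * jb * Ring.inverse (1 + bp * jb) * (1 - bp * b) = 0)
    (hc0 : (1 - c * cp) * jc * Ring.inverse (1 + cp * jc) * (1 - cp * c) = 0) :
    ∀ w : R, w = (1 + jb * bp)
        * Ring.inverse (1 + y * (a * jb * bp + cp * jc * a + cp * jc * a * jb * bp))
        * y * (1 + cp * jc) →
      IsBCInverse a (b + jb) (c + jc) w ∧
      IsUnit (1 + w * ja) ∧
      IsBCInverse (a + ja) (b + jb) (c + jc) (Ring.inverse (1 + w * ja) * w) := by
  intro w hw_def
  set k := a * jb * bp + cp * jc * a + cp * jc * a * jb * bp with hk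
  have hkJ : k ∈ jacobson (⊥ : Ideal R) :=
    add_mem (add_mem (mul_mem_right _ _ (mul_mem_left _ _ hjb))
      (mul_mem_right _ _ (mul_mem_left _ _ hjc)))
      (mul_mem_right _ _ (mul_mem_right _ _ (mul_mem_right _ _ (mul_mem_left _ _ hjc))))
  have hak : (1 + cp * jc) * a * (1 + jb * bp) = a + k := by rw [hk]; noncomm_ring
  have hyk := hy.add (isUnit_one_add_of_mem_jacobson_bot (mul_mem_left _ y hkJ))
  rw [← hak] at hyk
  obtain ⟨h, hh, hbh⟩ := exists_isUnit_add_eq_one_add_mul_mul hjb hb0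
  obtain ⟨g, hg, hcg⟩ := exists_isUnit_add_eq_mul_mul_one_add hjc hc0
  have hw : IsBCInverse a (b + jb) (c + jc) w := by
    rw [hw_def, mul_assoc _ (Ring.inverse _)]
    exact hbh ▸ hcg ▸ hyk.of_mul_mul.mul_units hh hg
  have hwJ := isUnit_one_add_of_mem_jacobson_bot (mul_mem_left _ w hja)
  exact ⟨hw, hwJ, hw.add hwJ⟩

/-- under the hypotheses, `a` is (b+j_b, c+j_c)-invertible with
`a^{‖(b+j_b,c+j_c)} = (1 + j_b b⁺)(1 + a^{‖(b,c)}(a j_b b⁺ + c⁺ j_c a + c⁺ j_c a j_b b⁺))⁻¹ a^{‖(b,c)} (1 + c⁺ j_c)`,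
`1 + a^{‖(b+j_b,c+j_c)} j_a` is a unit and
`(a + j_a)^{‖(b+j_b,c+j_c)} = (1 + a^{‖(b+j_b,c+j_c)} j_a)⁻¹ a^{‖(b+j_b,c+j_c)}`. -/
theorem stmt3 {R : Type*} [Ring R] (a b c y bp cp ja jb jc : R)
    (hja : ja ∈ Ideal.jacobson (⊥ : Ideal R))
    (hjb : jb ∈ Ideal.jacobson (⊥ : Ideal R))
    (hjc : jc ∈ Ideal.jacobson (⊥ : Ideal R))
    (hy : IsBCInverse a b c y)
    (hbp : b * bp * b = b ∧ bp * b * bp = bp)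
    (hcp : c * cp * c = c ∧ cp * c * cp = cp)
    (hb0 : (1 - b * bp) * jb * Ring.inverse (1 + bp * jb) * (1 - bp * b) = 0)
    (hc0 : (1 - c * cp) * jc * Ring.inverse (1 + cp * jc) * (1 - cp * c) = 0) :
    ∀ w : R, w = (1 + jb * bp)
        * Ring.inverse (1 + y * (a * jb * bp + cp * jc * a + cp * jc * a * jb * bp))
        * y * (1 + cp * jc) →
      IsBCInverse a (b + jb) (c + jc) w ∧
      IsUnit (1 + w * ja) ∧
      IsBCInverse (a + ja) (b + jb) (c + jc) (Ring.inverse (1 + w * ja) * w) :=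
  stmt3_general a b c y bp cp ja jb jc hja hjb hjc hy hb0 hc0
end

section
/- Let R be a ring with identity, a ∈ R and j_a ∈ J(R). Suppose x is a {2}-inverse of a and y is a {2}-inverse of a + j_a. Then the following are equivalent: (1) x·(a + (a + j_a))·y = x + y = y·(a + (a + j_a))·x; (2) x·(a + (a + j_a))·y = x + y; (3) x·j_a·y = x − y; (4) xR = yR and Rx = Ry; (5) 1 + x·j_a is a unit and y = (1 + x·j_a)⁻¹·x; (6) there exist b, c ∈ R such that x is the (b,c)-inverse of a and y is the (b,c)-inverse of a + j_a. -/
/-!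
Put `u = 1 + x j_a`, a unit because `j_a ∈ J(R)`; since `x a x = x`, condition (2) forces
`x a y = y`, and then (2) says `x (a + j_a) y = x`, i.e. (3), i.e. `u y = x`. From `u y = x`
and `u x = x (1 + j_a x)` one reads off `xR = yR` and `Rx = Ry`. A (b,c)-inverse only depends
on the one-sided ideals `bR` and `Rc`, and a {2}-inverse `x` of `a` is its own (x,x)-inverse, so
(4) gives (6) with `b = c = x`. Conversely, two (b,c)-inverses `x` of `a` and `y` of `a'`
absorb each other: `x a' y = x` and `x a y = y`, which yields (1).
-/

section

variable {R : Type*} [Ring R] {a a' b b' c c' j x y : R}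

theorem exists_mul_one_add_eq_one_of_mem_jacobson_bot (hj : j ∈ Ideal.jacobson (⊥ : Ideal R)) :
    ∃ z, z * (1 + j) = 1 := by
  obtain ⟨z, hz⟩ := Ideal.mem_jacobson_iff.1 hj 1
  rw [Ideal.mem_bot, mul_one, sub_eq_zero] at hz
  exact ⟨z, by rw [mul_add, mul_one, add_comm, hz]⟩

theorem isUnit_one_add_of_mem_jacobson_bot_s5 (hj : j ∈ Ideal.jacobson (⊥ : Ideal R)) :
    IsUnit (1 + j) := by
  obtain ⟨z, hz⟩ := exists_mul_one_add_eq_one_of_mem_jacobson_bot hj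
  -- `z = 1 + (-z j)` is again of the form `1 + radical`, so it has a left inverse `w` too
  have hz' : z = 1 + -z * j :=
    calc z = z * (1 + j) - z * j := by noncomm_ring
      _ = 1 + -z * j := by rw [hz, sub_eq_add_neg, neg_mul]
  obtain ⟨w, hw⟩ := exists_mul_one_add_eq_one_of_mem_jacobson_bot
    (Ideal.mul_mem_left _ (-z) hj)
  rw [← hz'] at hw
  have hwj : w = 1 + j :=
    calc w = w * (z * (1 + j)) := by rw [hz, mul_one]
      _ = 1 + j := by rw [← mul_assoc, hw, one_mul]
  exact ⟨⟨1 + j, z, by rw [← hwj, hw], hz⟩, rfl⟩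

theorem setOf_eq_mul_right_subset_iff :
    {z : R | ∃ r, z = x * r} ⊆ {z : R | ∃ r, z = y * r} ↔ ∃ r, x = y * r :=
  ⟨fun h => h ⟨1, (mul_one x).symm⟩,
    fun ⟨s, hs⟩ _ ⟨r, hr⟩ => ⟨s * r, by rw [hr, hs, mul_assoc]⟩⟩

theorem setOf_eq_mul_left_subset_iff :
    {z : R | ∃ r, z = r * x} ⊆ {z : R | ∃ r, z = r * y} ↔ ∃ r, x = r * y :=
  ⟨fun h => h ⟨1, (one_mul x).symm⟩,
    fun ⟨s, hs⟩ _ ⟨r, hr⟩ => ⟨r * s, by rw [hr, hs, mul_assoc]⟩⟩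

theorem setOf_eq_mul_right_eq_iff :
    {z : R | ∃ r, z = x * r} = {z : R | ∃ r, z = y * r} ↔
      (∃ r, x = y * r) ∧ ∃ r, y = x * r := by
  rw [Set.Subset.antisymm_iff, setOf_eq_mul_right_subset_iff, setOf_eq_mul_right_subset_iff]

theorem setOf_eq_mul_left_eq_iff :
    {z : R | ∃ r, z = r * x} = {z : R | ∃ r, z = r * y} ↔
      (∃ r, x = r * y) ∧ ∃ r, y = r * x := by
  rw [Set.Subset.antisymm_iff, setOf_eq_mul_left_subset_iff, setOf_eq_mul_left_subset_iff]

theorem isBCInverse_self (h : y * a * y = y) : IsBCInverse a y y y :=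
  ⟨h, h, ⟨a * y, by rw [← mul_assoc, h]⟩, ⟨y * a, h.symm⟩⟩

theorem IsBCInverse.congr (hy : IsBCInverse a b c y)
    (hb : {z : R | ∃ r, z = b * r} = {z : R | ∃ r, z = b' * r})
    (hc : {z : R | ∃ r, z = r * c} = {z : R | ∃ r, z = r * c'}) :
    IsBCInverse a b' c' y := by
  obtain ⟨hcay, hyab, ⟨s, rfl⟩, ⟨t, hyt⟩⟩ := hy
  obtain ⟨⟨p, hbp⟩, ⟨p', hb'p'⟩⟩ := setOf_eq_mul_right_eq_iff.1 hb
  obtain ⟨⟨q, hcq⟩, ⟨q', hc'q'⟩⟩ := setOf_eq_mul_left_eq_iff.1 hc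
  refine ⟨?_, ?_, ⟨p * s, by rw [hbp, mul_assoc]⟩, ⟨t * q, by rw [hyt, hcq, mul_assoc]⟩⟩
  · rw [hc'q', mul_assoc q', mul_assoc q', hcay]
  · rw [hb'p', ← mul_assoc, hyab]

theorem IsBCInverse.mul_mul_eq_self_left (hx : IsBCInverse a b c x)
    (hy : IsBCInverse a' b c y) : x * a' * y = x := by
  obtain ⟨t, rfl⟩ := hx.2.2.2
  rw [mul_assoc t, mul_assoc t, hy.1]

theorem IsBCInverse.mul_mul_eq_self_right (hx : IsBCInverse a b c x)
    (hy : IsBCInverse a' b c y) : x * a * y = y := by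
  obtain ⟨s, rfl⟩ := hy.2.2.1
  rw [← mul_assoc, hx.2.1]

theorem mul_mul_eq_sub_of_mul_add_mul_eq_add (hx : x * a * x = x)
    (h : x * (a + (a + j)) * y = x + y) : x * j * y = x - y := by
  have hsplit : x * (a + (a + j)) * y = x * a * y + x * (a + j) * y := by rw [mul_add, add_mul]
  -- left multiplication by `x a` fixes the left-hand side of `h`
  have hxay : x * a * y = y := by
    have hfix : x * a * (x * (a + (a + j)) * y) = x * (a + (a + j)) * y := by
      simp only [← mul_assoc, hx]
    rw [h, mul_add, hx, add_right_inj] at hfix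
    exact hfix
  rw [hsplit, hxay, add_comm, add_left_inj] at h
  rw [eq_sub_iff_add_eq]
  calc x * j * y + y = x * j * y + x * a * y := by rw [hxay]
    _ = x * (a + j) * y := by noncomm_ring
    _ = x := h

theorem one_add_mul_mul_eq_iff : (1 + x * j) * y = x ↔ x * j * y = x - y := by
  rw [add_mul, one_mul, eq_sub_iff_add_eq, add_comm]

theorem eq_inverse_one_add_mul_mul_iff (hu : IsUnit (1 + x * j)) :
    y = Ring.inverse (1 + x * j) * x ↔ x * j * y = x - y := by
  rw [eq_comm, Ring.inverse_mul_eq_iff_eq_mul _ _ _ hu, eq_comm, one_add_mul_mul_eq_iff]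

theorem setOf_eq_of_mul_mul_eq_sub (hu : IsUnit (1 + x * j)) (h : x * j * y = x - y) :
    {z : R | ∃ r, z = x * r} = {z : R | ∃ r, z = y * r} ∧
      {z : R | ∃ r, z = r * x} = {z : R | ∃ r, z = r * y} := by
  have huy : (1 + x * j) * y = x := one_add_mul_mul_eq_iff.2 h
  have hyx : y * (1 + j * x) = x := by
    refine hu.mul_left_cancel ?_
    rw [← mul_assoc, huy]
    noncomm_ring
  refine ⟨setOf_eq_mul_right_eq_iff.2 ⟨⟨_, hyx.symm⟩, ⟨1 - j * y, ?_⟩⟩,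
    setOf_eq_mul_left_eq_iff.2 ⟨⟨_, huy.symm⟩, ⟨_, (eq_inverse_one_add_mul_mul_iff hu).2 h⟩⟩⟩
  rw [mul_sub, mul_one, ← mul_assoc, h, sub_sub_cancel]

end

/-- for a {2}-inverse `x` of `a` and a {2}-inverse `y` of `a + j_a`
(`j_a` in the Jacobson radical), the six listed conditions are equivalent. -/
theorem stmt5 {R : Type*} [Ring R] (a ja x y : R)
    (hja : ja ∈ Ideal.jacobson (⊥ : Ideal R))
    (hx : x * a * x = x) (hy : y * (a + ja) * y = y) :
    List.TFAE
      [ x * (a + (a + ja)) * y = x + y ∧ x + y = y * (a + (a + ja)) * x,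
        x * (a + (a + ja)) * y = x + y,
        x * ja * y = x - y,
        ({z : R | ∃ r, z = x * r} = {z : R | ∃ r, z = y * r} ∧
          {z : R | ∃ r, z = r * x} = {z : R | ∃ r, z = r * y}),
        IsUnit (1 + x * ja) ∧ y = Ring.inverse (1 + x * ja) * x,
        ∃ b c, IsBCInverse a b c x ∧ IsBCInverse (a + ja) b c y ] := by
  have hu : IsUnit (1 + x * ja) :=
    isUnit_one_add_of_mem_jacobson_bot_s5 (Ideal.mul_mem_left _ x hja)
  tfae_have 1 → 2 := And.left
  tfae_have 2 → 3 := mul_mul_eq_sub_of_mul_add_mul_eq_add hx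
  tfae_have 3 → 5 := fun h => ⟨hu, (eq_inverse_one_add_mul_mul_iff hu).2 h⟩
  tfae_have 5 → 3 := fun h => (eq_inverse_one_add_mul_mul_iff hu).1 h.2
  tfae_have 3 → 4 := setOf_eq_of_mul_mul_eq_sub hu
  tfae_have 4 → 6 := fun ⟨hR, hL⟩ =>
    ⟨x, x, isBCInverse_self hx, (isBCInverse_self hy).congr hR.symm hL.symm⟩
  tfae_have 6 → 1 := by
    rintro ⟨b, c, hxbc, hybc⟩
    rw [mul_add x, add_mul (x * a), mul_add y, add_mul (y * a), hxbc.mul_mul_eq_self_right hybc,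
      hxbc.mul_mul_eq_self_left hybc, hybc.mul_mul_eq_self_left hxbc,
      hybc.mul_mul_eq_self_right hxbc, add_comm y x]
    exact ⟨rfl, rfl⟩
  tfae_finish
end
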